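/- Let Σ₁,…,Σ_K ∈ ℝ^{n×n} be positive definite, let α₁,…,α_K ∈ (0,1] with Σᵢ αᵢ = 1, and let f : ℝⁿ → ℝ^K be measurable with each component f^i taking values in [0,1]. Define g_G^i(x) = Σⱼ αⱼ · E_{ε ~ N(0,Σⱼ)}[f^i(x + ε)] and set B⁻¹ = Σⱼ αⱼ Σⱼ⁻¹. Fix x ∈ ℝⁿ and let c_A maximize g_G^i(x) over i. Then for every δ ∈ ℝⁿ satisfying √(δᵀB⁻¹δ) ≤ (1/√(2π)) · (g_G^{c_A}(x) − max_{c ≠ c_A} g_G^c(x)), one has g_G^{c_A}(x + δ) ≥ g_G^c(x + δ) for every c ≠ c_A. -/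

import Mathlib

/-!
A Gaussian smoothing `y ↦ ∫ F (y + ε) p(ε) dε` of a `[0, 1]`-valued `F`, with `p` the density of
`N(0, Σ)`, is `1`-Lipschitz for `‖δ‖_Σ = √(δᵀ Σ⁻¹ δ)`. For `r = ‖δ‖_Σ ≥ 1` this is trivial; for
`r < 1` and `s = 1 + 1/r`, the inequality `eʷ - 1 ≤ r e^{s w - 1}` gives the pointwise bound
`p(ε - δ) - p(ε) ≤ r p(ε - s δ)`, whose right-hand side integrates to `r`. By Cauchy–Schwarz,
`∑ αⱼ ‖δ‖_{Σⱼ} ≤ √(δᵀ B⁻¹ δ) =: R`, so no class score of the mixture moves by more than `R`.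
As `√(2π) ≥ 2`, the hypothesis on `δ` leaves a margin of at least `2R` between the top class and
every other class, which the perturbation cannot close.
-/

open MeasureTheory Matrix

/-- Density of the centered Gaussian `N(0, Σ)` on ℝⁿ (w.r.t. Lebesgue measure). -/
noncomputable def gaussDensity (n : ℕ) (Sig : Matrix (Fin n) (Fin n) ℝ)
    (ε : Fin n → ℝ) : ℝ :=
  (Real.sqrt ((2 * Real.pi) ^ n * Sig.det))⁻¹ * Real.exp (-(ε ⬝ᵥ (Sig⁻¹ *ᵥ ε)) / 2)

theorem Real.exp_sub_one_le_mul_exp {r : ℝ} (hr : 0 < r) (w : ℝ) :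
    Real.exp w - 1 ≤ r * Real.exp ((1 + 1 / r) * w - 1) := by
  have hw : w ≤ r * Real.exp (w / r - 1) := by
    have h := Real.add_one_le_exp (w / r - 1)
    rw [sub_add_cancel] at h
    calc w = r * (w / r) := by field_simp
      _ ≤ r * Real.exp (w / r - 1) := by gcongr
  calc Real.exp w - 1 = Real.exp w * (1 - Real.exp (-w)) := by
        rw [mul_sub, mul_one, ← Real.exp_add, add_neg_cancel, Real.exp_zero]
    _ ≤ Real.exp w * w := by gcongr; linarith [Real.one_sub_le_exp_neg w]
    _ ≤ Real.exp w * (r * Real.exp (w / r - 1)) := by gcongr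
    _ = r * Real.exp ((1 + 1 / r) * w - 1) := by
        rw [mul_left_comm, ← Real.exp_add]
        ring_nf

theorem Real.sum_mul_sqrt_le_sqrt_sum_mul {ι : Type*} (s : Finset ι) {w q : ι → ℝ}
    (hw : ∀ i, 0 ≤ w i) (hsum : ∑ i ∈ s, w i = 1) (hq : ∀ i, 0 ≤ q i) :
    ∑ i ∈ s, w i * √(q i) ≤ √(∑ i ∈ s, w i * q i) := by
  have h := Real.sum_sqrt_mul_sqrt_le s hw fun i => mul_nonneg (hw i) (hq i)
  rw [hsum, Real.sqrt_one, one_mul] at h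
  refine le_of_eq_of_le (Finset.sum_congr rfl fun i _ => ?_) h
  rw [Real.sqrt_mul (hw i), ← mul_assoc, Real.mul_self_sqrt (hw i)]

theorem Matrix.dotProduct_sum_smul_mulVec {m ι : Type*} [Fintype m] [Fintype ι]
    (w : ι → ℝ) (A : ι → Matrix m m ℝ) (v : m → ℝ) :
    v ⬝ᵥ ((∑ j, w j • A j) *ᵥ v) = ∑ j, w j * (v ⬝ᵥ (A j *ᵥ v)) := by
  simp [sum_mulVec, dotProduct_sum, smul_mulVec]

section PosDef

variable {ι : Type*} [Fintype ι] [DecidableEq ι] {S : Matrix ι ι ℝ}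

open scoped MatrixOrder in
theorem Matrix.PosSemidef.exists_eq_mul_transpose (hS : S.PosSemidef) :
    ∃ T : Matrix ι ι ℝ, S = T * Tᵀ := by
  obtain ⟨B, hB⟩ := CStarAlgebra.nonneg_iff_eq_star_mul_self.mp hS.nonneg
  exact ⟨Bᵀ, by simpa [star_eq_conjTranspose] using hB⟩

theorem Matrix.PosDef.exists_eq_mul_transpose (hS : S.PosDef) :
    ∃ T : Matrix ι ι ℝ, S = T * Tᵀ ∧ T.det ≠ 0 := by
  obtain ⟨T, hST⟩ := hS.posSemidef.exists_eq_mul_transpose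
  refine ⟨T, hST, fun hT => hS.det_pos.ne' ?_⟩
  rw [hST, det_mul, hT, zero_mul]

theorem Matrix.IsHermitian.dotProduct_inv_mulVec_comm (hS : S.IsHermitian) (u v : ι → ℝ) :
    u ⬝ᵥ (S⁻¹ *ᵥ v) = v ⬝ᵥ (S⁻¹ *ᵥ u) := by
  have hsymm : S⁻¹ᵀ = S⁻¹ := by simpa using hS.inv.eq
  rw [dotProduct_mulVec, ← hsymm, vecMul_transpose, dotProduct_comm, hsymm]

theorem Matrix.PosDef.dotProduct_inv_mulVec_self_nonneg (hS : S.PosDef) (v : ι → ℝ) :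
    0 ≤ v ⬝ᵥ (S⁻¹ *ᵥ v) :=
  hS.inv.posSemidef.dotProduct_mulVec_nonneg v

end PosDef

section ChangeOfVariables

variable {ι : Type*} [Fintype ι] [DecidableEq ι] {T : Matrix ι ι ℝ}

theorem measurableEmbedding_mulVec (hT : T.det ≠ 0) : MeasurableEmbedding (T *ᵥ ·) :=
  let e : (ι → ℝ) ≃ᵐ (ι → ℝ) :=
    { toFun := (T *ᵥ ·)
      invFun := (T⁻¹ *ᵥ ·)
      left_inv := fun v => by simp [mulVec_mulVec, nonsing_inv_mul _ hT.isUnit]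
      right_inv := fun v => by simp [mulVec_mulVec, mul_nonsing_inv _ hT.isUnit]
      measurable_toFun := (continuous_const.matrix_mulVec continuous_id).measurable
      measurable_invFun := (continuous_const.matrix_mulVec continuous_id).measurable }
  e.measurableEmbedding

theorem map_mulVec_volume (hT : T.det ≠ 0) :
    Measure.map (T *ᵥ ·) volume = ENNReal.ofReal |T.det|⁻¹ • volume := by
  rw [← abs_inv]
  exact Real.map_matrix_volume_pi_eq_smul_volume_pi hT

theorem integral_comp_mulVec {E : Type*} [NormedAddCommGroup E] [NormedSpace ℝ E]
    (hT : T.det ≠ 0) (g : (ι → ℝ) → E) : ∫ v, g (T *ᵥ v) = |T.det|⁻¹ • ∫ y, g y := by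
  rw [← (measurableEmbedding_mulVec hT).integral_map, map_mulVec_volume hT,
    integral_smul_measure, ENNReal.toReal_ofReal (by positivity)]

theorem integrable_comp_mulVec_iff {E : Type*} [NormedAddCommGroup E]
    (hT : T.det ≠ 0) {g : (ι → ℝ) → E} : Integrable (fun v => g (T *ᵥ v)) ↔ Integrable g := by
  rw [← Function.comp_def, ← (measurableEmbedding_mulVec hT).integrable_map_iff,
    map_mulVec_volume hT, integrable_smul_measure (by simpa using hT) ENNReal.ofReal_ne_top]

end ChangeOfVariables

section GaussDensity

variable {n : ℕ} {S : Matrix (Fin n) (Fin n) ℝ}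

theorem gaussDensity_pos (hS : S.PosDef) (ε : Fin n → ℝ) : 0 < gaussDensity n S ε :=
  mul_pos (inv_pos.mpr (Real.sqrt_pos.mpr (mul_pos (by positivity) hS.det_pos))) (Real.exp_pos _)

theorem gaussDensity_sub (hS : S.IsHermitian) (ε μ : Fin n → ℝ) :
    gaussDensity n S (ε - μ) =
      gaussDensity n S ε * Real.exp (ε ⬝ᵥ (S⁻¹ *ᵥ μ) - μ ⬝ᵥ (S⁻¹ *ᵥ μ) / 2) := by
  unfold gaussDensity
  rw [mul_assoc, ← Real.exp_add, mulVec_sub, sub_dotProduct, dotProduct_sub, dotProduct_sub,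
    hS.dotProduct_inv_mulVec_comm μ ε]
  ring_nf

theorem gaussDensity_mulVec {T : Matrix (Fin n) (Fin n) ℝ} (hST : S = T * Tᵀ) (hT : T.det ≠ 0)
    (v : Fin n → ℝ) :
    gaussDensity n S (T *ᵥ v) =
      (Real.sqrt (2 * Real.pi) ^ n * |T.det|)⁻¹ * ∏ i, Real.exp (-(1 / 2) * v i ^ 2) := by
  have hquad : T *ᵥ v ⬝ᵥ (S⁻¹ *ᵥ (T *ᵥ v)) = v ⬝ᵥ v := by
    have hTS : Tᵀ * S⁻¹ * T = 1 := by
      rw [hST, Matrix.mul_inv_rev, ← transpose_nonsing_inv, ← mul_assoc, ← transpose_mul,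
        nonsing_inv_mul _ hT.isUnit, transpose_one, one_mul, nonsing_inv_mul _ hT.isUnit]
    rw [mulVec_mulVec]
    nth_rewrite 1 [← vecMul_transpose]
    rw [← dotProduct_mulVec, mulVec_mulVec, ← mul_assoc, hTS, one_mulVec]
  have hdet : S.det = T.det ^ 2 := by rw [hST, det_mul, det_transpose, sq]
  have hsqrt_pow : √((2 * Real.pi) ^ n) = √(2 * Real.pi) ^ n := by
    rw [← Real.sqrt_sq (by positivity : 0 ≤ √(2 * Real.pi) ^ n), ← pow_mul, pow_mul',
      Real.sq_sqrt (by positivity)]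
  unfold gaussDensity
  rw [hquad, hdet, Real.sqrt_mul (by positivity), Real.sqrt_sq_eq_abs, hsqrt_pow, ← Real.exp_sum]
  congr 2
  simp only [dotProduct, Finset.sum_div, ← Finset.sum_neg_distrib]
  ring_nf

theorem integral_exp_neg_half_mul_sq :
    ∫ x : ℝ, Real.exp (-(1 / 2) * x ^ 2) = Real.sqrt (2 * Real.pi) := by
  rw [integral_gaussian]
  norm_num [div_div_eq_mul_div, mul_comm]

theorem integrable_gaussDensity (hS : S.PosDef) : Integrable (gaussDensity n S) := by
  obtain ⟨T, hST, hT⟩ := hS.exists_eq_mul_transpose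
  rw [← integrable_comp_mulVec_iff hT]
  simp_rw [gaussDensity_mulVec hST hT]
  exact (Integrable.fintype_prod fun _ => integrable_exp_neg_mul_sq (by norm_num)).const_mul _

theorem integral_gaussDensity (hS : S.PosDef) : ∫ ε, gaussDensity n S ε = 1 := by
  obtain ⟨T, hST, hT⟩ := hS.exists_eq_mul_transpose
  have h := integral_comp_mulVec hT (gaussDensity n S)
  simp_rw [gaussDensity_mulVec hST hT, integral_const_mul] at h
  rw [volume_pi, integral_fintype_prod_eq_pow (fun x : ℝ => Real.exp (-(1 / 2) * x ^ 2)),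
    integral_exp_neg_half_mul_sq, Fintype.card_fin, ← volume_pi, smul_eq_mul] at h
  have h2π : Real.sqrt (2 * Real.pi) ≠ 0 := by positivity
  field_simp [abs_ne_zero.mpr hT] at h
  exact h.symm

theorem gaussDensity_sub_sub_le (hS : S.PosDef) {δ : Fin n → ℝ} {r : ℝ}
    (hr : δ ⬝ᵥ (S⁻¹ *ᵥ δ) = r ^ 2) (hr0 : 0 < r) (hr1 : r ≤ 1) (ε : Fin n → ℝ) :
    gaussDensity n S (ε - δ) - gaussDensity n S ε ≤
      r * gaussDensity n S (ε - (1 + 1 / r) • δ) := by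
  rw [gaussDensity_sub hS.isHermitian, gaussDensity_sub hS.isHermitian]
  simp only [mulVec_smul, dotProduct_smul, smul_dotProduct, smul_eq_mul, hr]
  set s := 1 + 1 / r
  set z := ε ⬝ᵥ (S⁻¹ *ᵥ δ)
  have hsr : s * r = r + 1 := by simp only [s]; field_simp
  have hexp : Real.exp (z - r ^ 2 / 2) - 1 ≤ r * Real.exp (s * z - s ^ 2 * r ^ 2 / 2) :=
    calc Real.exp (z - r ^ 2 / 2) - 1 ≤ r * Real.exp (s * (z - r ^ 2 / 2) - 1) :=
          Real.exp_sub_one_le_mul_exp hr0 _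
      _ ≤ r * Real.exp (s * z - s ^ 2 * r ^ 2 / 2) := by
          gcongr r * Real.exp ?_
          nlinarith
  have hp := gaussDensity_pos hS ε
  calc gaussDensity n S ε * Real.exp (z - r ^ 2 / 2) - gaussDensity n S ε
      = gaussDensity n S ε * (Real.exp (z - r ^ 2 / 2) - 1) := by ring
    _ ≤ gaussDensity n S ε * (r * Real.exp (s * z - s ^ 2 * r ^ 2 / 2)) := by gcongr
    _ = _ := by ring_nf

end GaussDensity

section GaussSmoothing

variable {n : ℕ} {S : Matrix (Fin n) (Fin n) ℝ} {F : (Fin n → ℝ) → ℝ}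

noncomputable def gaussSmoothing (S : Matrix (Fin n) (Fin n) ℝ) (F : (Fin n → ℝ) → ℝ)
    (y : Fin n → ℝ) : ℝ :=
  ∫ ε, F (y + ε) * gaussDensity n S ε

theorem integrable_mul_gaussDensity_sub (hS : S.PosDef) (hF : Measurable F)
    (hF01 : ∀ v, F v ∈ Set.Icc (0 : ℝ) 1) (y μ : Fin n → ℝ) :
    Integrable fun ε => F (y + ε) * gaussDensity n S (ε - μ) :=
  ((integrable_gaussDensity hS).comp_sub_right μ).bdd_mul
    (hF.comp (measurable_const_add y)).aestronglyMeasurable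
    (ae_of_all _ fun ε => abs_le.mpr ⟨by linarith [(hF01 (y + ε)).1], (hF01 (y + ε)).2⟩)

theorem gaussSmoothing_mem_Icc (hS : S.PosDef) (hF : Measurable F)
    (hF01 : ∀ v, F v ∈ Set.Icc (0 : ℝ) 1) (y : Fin n → ℝ) :
    gaussSmoothing S F y ∈ Set.Icc (0 : ℝ) 1 := by
  refine ⟨integral_nonneg fun ε => mul_nonneg (hF01 _).1 (gaussDensity_pos hS ε).le, ?_⟩
  refine (integral_mono ?_ (integrable_gaussDensity hS) fun ε => ?_).trans_eq
    (integral_gaussDensity hS)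
  · simpa using integrable_mul_gaussDensity_sub hS hF hF01 y 0
  · exact mul_le_of_le_one_left (gaussDensity_pos hS ε).le (hF01 _).2

theorem gaussSmoothing_add (y δ : Fin n → ℝ) :
    gaussSmoothing S F (y + δ) = ∫ ε, F (y + ε) * gaussDensity n S (ε - δ) := by
  rw [gaussSmoothing, ← integral_sub_right_eq_self _ δ]
  simp only [add_add_sub_cancel]

theorem gaussSmoothing_add_sub_le (hS : S.PosDef) (hF : Measurable F)
    (hF01 : ∀ v, F v ∈ Set.Icc (0 : ℝ) 1) (y δ : Fin n → ℝ) :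
    gaussSmoothing S F (y + δ) - gaussSmoothing S F y ≤ √(δ ⬝ᵥ (S⁻¹ *ᵥ δ)) := by
  rcases eq_or_ne δ 0 with rfl | hδ
  · simp
  have hq : 0 < δ ⬝ᵥ (S⁻¹ *ᵥ δ) := hS.inv.dotProduct_mulVec_pos hδ
  have hr0 := Real.sqrt_pos.mpr hq
  have hr := (Real.sq_sqrt hq.le).symm
  generalize √(δ ⬝ᵥ (S⁻¹ *ᵥ δ)) = r at hr hr0 ⊢
  rcases le_or_gt 1 r with hr1 | hr1
  · linarith [(gaussSmoothing_mem_Icc hS hF hF01 (y + δ)).2,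
      (gaussSmoothing_mem_Icc hS hF hF01 y).1]
  have hint := integrable_mul_gaussDensity_sub hS hF hF01 y
  have hint0 : Integrable fun ε => F (y + ε) * gaussDensity n S ε := by simpa using hint 0
  calc gaussSmoothing S F (y + δ) - gaussSmoothing S F y
      = ∫ ε, F (y + ε) * (gaussDensity n S (ε - δ) - gaussDensity n S ε) := by
        rw [gaussSmoothing_add, gaussSmoothing, ← integral_sub (hint δ) hint0]
        simp only [mul_sub]
    _ ≤ ∫ ε, r * gaussDensity n S (ε - (1 + 1 / r) • δ) := by
        refine integral_mono ?_ ?_ fun ε => ?_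
        · simp only [mul_sub]
          exact (hint δ).sub hint0
        · exact ((integrable_gaussDensity hS).comp_sub_right _).const_mul r
        · have hle := gaussDensity_sub_sub_le hS hr hr0 hr1.le ε
          have hb := mul_nonneg hr0.le (gaussDensity_pos hS (ε - (1 + 1 / r) • δ)).le
          obtain ⟨hF0, hF1⟩ := hF01 (y + ε)
          -- with `d` the density increment and `b` its bound, `b - F d = F (b - d) + (1 - F) b`
          nlinarith [mul_nonneg hF0 (sub_nonneg.2 hle), mul_nonneg (sub_nonneg.2 hF1) hb]
    _ = r := by
        rw [integral_const_mul, integral_sub_right_eq_self, integral_gaussDensity hS, mul_one]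

theorem abs_gaussSmoothing_add_sub_le (hS : S.PosDef) (hF : Measurable F)
    (hF01 : ∀ v, F v ∈ Set.Icc (0 : ℝ) 1) (y δ : Fin n → ℝ) :
    |gaussSmoothing S F (y + δ) - gaussSmoothing S F y| ≤ √(δ ⬝ᵥ (S⁻¹ *ᵥ δ)) := by
  refine abs_sub_le_iff.mpr ⟨gaussSmoothing_add_sub_le hS hF hF01 y δ, ?_⟩
  simpa [mulVec_neg] using gaussSmoothing_add_sub_le hS hF hF01 (y + δ) (-δ)

end GaussSmoothing

theorem abs_sum_mul_gaussSmoothing_add_sub_le {n : ℕ} {ι : Type*} [Fintype ι]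
    {Sigs : ι → Matrix (Fin n) (Fin n) ℝ} (hSigs : ∀ j, (Sigs j).PosDef) {α : ι → ℝ}
    (hα : ∀ j, 0 ≤ α j) (hsum : ∑ j, α j = 1) {F : (Fin n → ℝ) → ℝ} (hF : Measurable F)
    (hF01 : ∀ v, F v ∈ Set.Icc (0 : ℝ) 1) (y δ : Fin n → ℝ) :
    |∑ j, α j * gaussSmoothing (Sigs j) F (y + δ) - ∑ j, α j * gaussSmoothing (Sigs j) F y| ≤
      √(δ ⬝ᵥ ((∑ j, α j • (Sigs j)⁻¹) *ᵥ δ)) := by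
  calc |∑ j, α j * gaussSmoothing (Sigs j) F (y + δ) - ∑ j, α j * gaussSmoothing (Sigs j) F y|
      = |∑ j, α j * (gaussSmoothing (Sigs j) F (y + δ) - gaussSmoothing (Sigs j) F y)| := by
        simp only [mul_sub, Finset.sum_sub_distrib]
    _ ≤ ∑ j, α j * |gaussSmoothing (Sigs j) F (y + δ) - gaussSmoothing (Sigs j) F y| := by
        refine (Finset.abs_sum_le_sum_abs _ _).trans_eq (Finset.sum_congr rfl fun j _ => ?_)
        rw [abs_mul, abs_of_nonneg (hα j)]
    _ ≤ ∑ j, α j * √(δ ⬝ᵥ ((Sigs j)⁻¹ *ᵥ δ)) := by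
        gcongr with j
        exacts [hα j, abs_gaussSmoothing_add_sub_le (hSigs j) hF hF01 y δ]
    _ ≤ √(δ ⬝ᵥ ((∑ j, α j • (Sigs j)⁻¹) *ᵥ δ)) := by
        rw [dotProduct_sum_smul_mulVec]
        exact Real.sum_mul_sqrt_le_sqrt_sum_mul _ hα hsum fun j =>
          (hSigs j).dotProduct_inv_mulVec_self_nonneg δ

theorem gaussian_mixture_smoothing_certificate_general (n K : ℕ)
    (Sigs : Fin K → Matrix (Fin n) (Fin n) ℝ) (hSigs : ∀ j, (Sigs j).PosDef)
    (α : Fin K → ℝ) (hα : ∀ j, α j ∈ Set.Ioc (0:ℝ) 1) (hsum : ∑ j, α j = 1)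
    (f : (Fin n → ℝ) → Fin K → ℝ) (hf : Measurable f)
    (hf01 : ∀ v i, f v i ∈ Set.Icc (0:ℝ) 1)
    (gG : (Fin n → ℝ) → Fin K → ℝ)
    (hgG : ∀ x i, gG x i = ∑ j, α j * ∫ ε, f (x + ε) i * gaussDensity n (Sigs j) ε)
    (x : Fin n → ℝ) (cA : Fin K)
    (hne : (Finset.univ.erase cA).Nonempty)
    (δ : Fin n → ℝ)
    (hδ : Real.sqrt (δ ⬝ᵥ ((∑ j, α j • (Sigs j)⁻¹) *ᵥ δ)) ≤
      (Real.sqrt (2 * Real.pi))⁻¹ *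
        (gG x cA - (Finset.univ.erase cA).sup' hne (fun c => gG x c))) :
    ∀ c, c ≠ cA → gG (x + δ) c ≤ gG (x + δ) cA := by
  intro c hc
  set R := √(δ ⬝ᵥ ((∑ j, α j • (Sigs j)⁻¹) *ᵥ δ))
  have hlip : ∀ i, |gG (x + δ) i - gG x i| ≤ R := fun i => by
    rw [hgG, hgG]
    exact abs_sum_mul_gaussSmoothing_add_sub_le (F := fun v => f v i) hSigs (fun j => (hα j).1.le)
      hsum ((measurable_pi_apply i).comp hf) (fun v => hf01 v i) x δ
  have h2π : 2 ≤ √(2 * Real.pi) := Real.le_sqrt_of_sq_le (by nlinarith [Real.pi_gt_three])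
  have hmargin : 2 * R ≤ gG x cA - (Finset.univ.erase cA).sup' hne (fun c => gG x c) :=
    (mul_le_mul_of_nonneg_right h2π (Real.sqrt_nonneg _)).trans
      ((le_inv_mul_iff₀ (by positivity)).mp hδ)
  have hc_le : gG x c ≤ (Finset.univ.erase cA).sup' hne (fun c => gG x c) :=
    Finset.le_sup' (fun c => gG x c) (Finset.mem_erase.mpr ⟨hc, Finset.mem_univ c⟩)
  linarith [(abs_le.mp (hlip c)).2, (abs_le.mp (hlip cA)).1]

/-- certificate for Gaussian-mixture smoothed classifiers: with
`B⁻¹ = Σⱼ αⱼ Σⱼ⁻¹`, the top class `cA` at `x` is preserved for every `δ` with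
`√(δᵀB⁻¹δ) ≤ (1/√(2π)) (g^{cA}(x) − max_{c ≠ cA} g^c(x))`. -/
theorem gaussian_mixture_smoothing_certificate (n K : ℕ)
    (Sigs : Fin K → Matrix (Fin n) (Fin n) ℝ) (hSigs : ∀ j, (Sigs j).PosDef)
    (α : Fin K → ℝ) (hα : ∀ j, α j ∈ Set.Ioc (0:ℝ) 1) (hsum : ∑ j, α j = 1)
    (f : (Fin n → ℝ) → Fin K → ℝ) (hf : Measurable f)
    (hf01 : ∀ v i, f v i ∈ Set.Icc (0:ℝ) 1)
    (gG : (Fin n → ℝ) → Fin K → ℝ)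
    (hgG : ∀ x i, gG x i = ∑ j, α j * ∫ ε, f (x + ε) i * gaussDensity n (Sigs j) ε)
    (x : Fin n → ℝ) (cA : Fin K) (hcA : ∀ i, gG x i ≤ gG x cA)
    (hne : (Finset.univ.erase cA).Nonempty)
    (δ : Fin n → ℝ)
    (hδ : Real.sqrt (δ ⬝ᵥ ((∑ j, α j • (Sigs j)⁻¹) *ᵥ δ)) ≤
      (Real.sqrt (2 * Real.pi))⁻¹ *
        (gG x cA - (Finset.univ.erase cA).sup' hne (fun c => gG x c))) :
    ∀ c, c ≠ cA → gG (x + δ) c ≤ gG (x + δ) cA :=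
  gaussian_mixture_smoothing_certificate_general n K Sigs hSigs α hα hsum f hf hf01 gG hgG x cA hne
    δ hδ
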